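/- Assume 𝕀 ≠ ∅ and that δ₁(w_i) = δ₂(w_i) = deg(w_i) + 1 for every i ∈ 𝕀. Then S′∖S = {w_i : i ∈ 𝕀}; in particular the cardinality of S′∖S equals the cardinality of 𝕀 and is at most d − k. -/

import Mathlib

namespace ProjMonomialCurve

/-- The numerical semigroup generated by `a 1, …, a k` (equivalently by `A₁ = {0,a 1,…,a k}`). -/
def S1 (k : ℕ) (a : ℕ → ℕ) : Set ℕ :=
  {n | ∃ x : ℕ → ℕ, n = ∑ i ∈ Finset.Icc 1 k, x i * a i}

/-- The numerical semigroup generated by the nonzero elements `d - a i` (`0 ≤ i ≤ k-1`)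
of `A₂`, where `d = a k`. -/
def S2 (k : ℕ) (a : ℕ → ℕ) : Set ℕ :=
  {n | ∃ x : ℕ → ℕ, n = ∑ i ∈ Finset.range k, x i * (a k - a i)}

/-- `δ₁ n`: least total number of summands over representations `n = ∑ xᵢ aᵢ`. -/
noncomputable def delta1 (k : ℕ) (a : ℕ → ℕ) (n : ℕ) : ℕ :=
  sInf {m | ∃ x : ℕ → ℕ, n = ∑ i ∈ Finset.Icc 1 k, x i * a i ∧ m = ∑ i ∈ Finset.Icc 1 k, x i}

/-- `δ₂ n`: least total number of summands over representations of `n` by the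
nonzero elements of `A₂`. -/
noncomputable def delta2 (k : ℕ) (a : ℕ → ℕ) (n : ℕ) : ℕ :=
  sInf {m | ∃ x : ℕ → ℕ,
    n = ∑ i ∈ Finset.range k, x i * (a k - a i) ∧ m = ∑ i ∈ Finset.range k, x i}

/-- `ω₁ i`: the least element of `S₍₁₎` congruent to `i` modulo `d = a k`. -/
noncomputable def omega1 (k : ℕ) (a : ℕ → ℕ) (i : ℕ) : ℕ :=
  sInf {n | n ∈ S1 k a ∧ n % a k = i % a k}

/-- `ω₂ i`: the least element of `S₍₂₎` congruent to `i` modulo `d = a k`. -/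
noncomputable def omega2 (k : ℕ) (a : ℕ → ℕ) (i : ℕ) : ℕ :=
  sInf {n | n ∈ S2 k a ∧ n % a k = i % a k}

/-- `w i = (ω₁(i), ω₂(d-i))`. -/
noncomputable def w (k : ℕ) (a : ℕ → ℕ) (i : ℕ) : ℕ × ℕ :=
  (omega1 k a i, omega2 k a (a k - i))

/-- `e h = (h, d - h)`. -/
def e (k : ℕ) (a : ℕ → ℕ) (h : ℕ) : ℕ × ℕ := (h, a k - h)

/-- The affine semigroup `S ⊆ ℕ²` generated by `e (a 0), …, e (a k)`. -/
def S (k : ℕ) (a : ℕ → ℕ) : Set (ℕ × ℕ) :=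
  {u | ∃ x : ℕ → ℕ, u = ∑ i ∈ Finset.range (k+1), x i • e k a (a i)}

/-- `S' = {u ∈ ℕ² | u + p•e₀ ∈ S and u + p•e_d ∈ S for some p ∈ ℕ}`. -/
def S' (k : ℕ) (a : ℕ → ℕ) : Set (ℕ × ℕ) :=
  {u | ∃ p : ℕ, u + p • e k a 0 ∈ S k a ∧ u + p • e k a (a k) ∈ S k a}

/-- `deg u = (u₁ + u₂)/d` for `u ∈ ℕ²`. -/
def deg (k : ℕ) (a : ℕ → ℕ) (u : ℕ × ℕ) : ℕ := (u.1 + u.2) / a k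

/-- The index set `𝕀`. -/
noncomputable def II (k : ℕ) (a : ℕ → ℕ) : Set ℕ :=
  {i | 1 ≤ i ∧ i ≤ a k - 1 ∧ (∀ j, 1 ≤ j → j ≤ k - 1 → i ≠ a j) ∧
    deg k a (w k a i) < delta1 k a (w k a i).1}

/-- `T = {u ∈ ℤ² | d ∣ u₁+u₂, u₁ ∉ S₍₁₎, u₂ ∉ S₍₂₎}`. -/
def T (k : ℕ) (a : ℕ → ℕ) : Set (ℤ × ℤ) :=
  {u | (a k : ℤ) ∣ u.1 + u.2 ∧ (∀ n ∈ S1 k a, (n : ℤ) ≠ u.1) ∧ (∀ n ∈ S2 k a, (n : ℤ) ≠ u.2)}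

/-- `deg` for integer points. -/
def degZ (k : ℕ) (a : ℕ → ℕ) (u : ℤ × ℤ) : ℤ := (u.1 + u.2) / (a k : ℤ)

/-- The Castelnuovo–Mumford regularity, expressed combinatorially:
`max({deg u + 1 : u ∈ S'∖S} ∪ {deg u + 2 : u ∈ T})`. -/
noncomputable def reg (k : ℕ) (a : ℕ → ℕ) : ℤ :=
  sSup ({z : ℤ | ∃ u ∈ S' k a \ S k a, z = (deg k a u : ℤ) + 1} ∪
        {z : ℤ | ∃ u ∈ T k a, z = degZ k a u + 2})

/-- Frobenius number of `S₍₁₎` (greatest integer not in it; `-1` if the semigroup is all of `ℕ`). -/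
noncomputable def F1 (k : ℕ) (a : ℕ → ℕ) : ℤ :=
  sSup {z : ℤ | ∀ n ∈ S1 k a, (n : ℤ) ≠ z}

/-- Frobenius number of `S₍₂₎`. -/
noncomputable def F2 (k : ℕ) (a : ℕ → ℕ) : ℤ :=
  sSup {z : ℤ | ∀ n ∈ S2 k a, (n : ℤ) ≠ z}

/-- The largest gap `λ_max = max_{1 ≤ i ≤ k} (a i - a (i-1) - 1)`. -/
def lamMax (k : ℕ) (a : ℕ → ℕ) : ℕ :=
  (Finset.Icc 1 k).sup (fun i => a i - a (i-1) - 1)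

/-- The second largest gap: the minimum over `i` of the largest gap among indices `≠ i`. -/
noncomputable def lamSl (k : ℕ) (a : ℕ → ℕ) : ℕ :=
  sInf {m | ∃ i, 1 ≤ i ∧ i ≤ k ∧
    m = ((Finset.Icc 1 k).erase i).sup (fun j => a j - a (j-1) - 1)}

/-- The set `A₁ = {a 0, a 1, …, a k}`. -/
def A1set (k : ℕ) (a : ℕ → ℕ) : Set ℕ := {m | ∃ j ≤ k, a j = m}

/-!
`S` consists of the sums `∑ xᵢ (aᵢ, d - aᵢ)`, so a point `u` with `d ∣ u₁ + u₂` lies in `S`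
exactly when `u₁` is a sum of at most `deg u` of the `aᵢ` (pad with copies of `e₀`), or,
symmetrically, when `u₂` is a sum of at most `deg u` of the `d - aᵢ`; and `S'` consists of
the `u` with `d ∣ u₁ + u₂`, `u₁ ∈ S₍₁₎`, `u₂ ∈ S₍₂₎`. Such a `u` decomposes as
`w_i + q₁ e_d + q₂ e₀` with `i = u₁ mod d`; each shift raises `deg` by one and `δ₁`, `δ₂`
by at most one. So if `u ∉ S` then `δ₁(w_i) > deg w_i + q₂` and `δ₂(w_i) > deg w_i + q₁`,
hence `i ∈ 𝕀`, and `δ = deg + 1` at `w_i` forces `q₁ = q₂ = 0`.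
-/

section Combinations

variable {ι : Type*} {s : Finset ι} {g : ι → ℕ} {n m : ℕ}

-- `S1 k a`, `delta1 k a` are `combinations`, `minSummands` for `Icc 1 k` and `a` by `rfl`;
-- `S2 k a`, `delta2 k a` likewise for `range k` and `fun i => a k - a i`.
def combinations (s : Finset ι) (g : ι → ℕ) : Set ℕ :=
  {n | ∃ x : ι → ℕ, n = ∑ i ∈ s, x i * g i}

noncomputable def minSummands (s : Finset ι) (g : ι → ℕ) (n : ℕ) : ℕ :=
  sInf {m | ∃ x : ι → ℕ, n = ∑ i ∈ s, x i * g i ∧ m = ∑ i ∈ s, x i}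

theorem minSummands_le (x : ι → ℕ) (h : n = ∑ i ∈ s, x i * g i) :
    minSummands s g n ≤ ∑ i ∈ s, x i :=
  Nat.sInf_le ⟨x, h, rfl⟩

theorem exists_minSummands_eq (h : n ∈ combinations s g) :
    ∃ x : ι → ℕ, n = ∑ i ∈ s, x i * g i ∧ minSummands s g n = ∑ i ∈ s, x i := by
  obtain ⟨x, hx⟩ := h
  exact Nat.sInf_mem (s := {m | ∃ x : ι → ℕ, n = ∑ i ∈ s, x i * g i ∧ m = ∑ i ∈ s, x i})
    ⟨_, x, hx, rfl⟩

theorem mem_combinations_and_minSummands_le_iff :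
    n ∈ combinations s g ∧ minSummands s g n ≤ m ↔
      ∃ x : ι → ℕ, n = ∑ i ∈ s, x i * g i ∧ ∑ i ∈ s, x i ≤ m := by
  constructor
  · rintro ⟨hn, hle⟩
    obtain ⟨x, hx, hmin⟩ := exists_minSummands_eq hn
    exact ⟨x, hx, hmin ▸ hle⟩
  · rintro ⟨x, hx, hle⟩
    exact ⟨⟨x, hx⟩, (minSummands_le x hx).trans hle⟩

theorem sum_add_single_mul [DecidableEq ι] {j : ι} (hj : j ∈ s) (x : ι → ℕ) (q : ℕ) :
    ∑ i ∈ s, (x + Pi.single j q : ι → ℕ) i * g i = ∑ i ∈ s, x i * g i + q * g j := by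
  simp [add_mul, Finset.sum_add_distrib, Pi.single_apply, hj]

theorem add_mul_mem_combinations {j : ι} (hj : j ∈ s) (hn : n ∈ combinations s g) (q : ℕ) :
    n + q * g j ∈ combinations s g := by
  classical
  obtain ⟨x, rfl⟩ := hn
  exact ⟨x + Pi.single j q, (sum_add_single_mul hj x q).symm⟩

theorem minSummands_add_mul_le {j : ι} (hj : j ∈ s) (hn : n ∈ combinations s g) (q : ℕ) :
    minSummands s g (n + q * g j) ≤ minSummands s g n + q := by
  classical
  obtain ⟨x, rfl, hmin⟩ := exists_minSummands_eq hn
  have hlen := sum_add_single_mul (g := fun _ => 1) hj x q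
  simp only [mul_one] at hlen
  rw [hmin, ← hlen]
  exact minSummands_le _ (sum_add_single_mul hj x q).symm

theorem zero_mem_combinations : 0 ∈ combinations s g :=
  ⟨0, by simp⟩

theorem mem_combinations_of_mem {j : ι} (hj : j ∈ s) : g j ∈ combinations s g := by
  simpa using add_mul_mem_combinations hj zero_mem_combinations 1

theorem minSummands_zero : minSummands s g 0 = 0 :=
  Nat.le_zero.mp (by simpa using minSummands_le (s := s) (g := g) 0 (by simp))

theorem minSummands_le_one_of_mem {j : ι} (hj : j ∈ s) : minSummands s g (g j) ≤ 1 := by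
  simpa [minSummands_zero] using minSummands_add_mul_le hj zero_mem_combinations 1

theorem natCast_finset_gcd (s : Finset ι) (g : ι → ℕ) :
    ((s.gcd g : ℕ) : ℤ) = s.gcd (fun i => (g i : ℤ)) := by
  classical
  induction s using Finset.induction with
  | empty => simp
  | insert j t hj ih =>
    rw [Finset.gcd_insert, Finset.gcd_insert, ← ih, ← Int.coe_gcd, Int.gcd_natCast_natCast]
    rfl

theorem exists_mem_combinations_mod_eq {d : ℕ} (hd : 0 < d) (hs : s.gcd g = 1) (r : ℕ) :
    ∃ n ∈ combinations s g, n % d = r % d := by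
  obtain ⟨c, hc⟩ := Finset.gcd_eq_sum_mul s (fun i => (g i : ℤ))
  rw [← natCast_finset_gcd, hs] at hc
  refine ⟨_, ⟨fun i => (r * c i % d).toNat, rfl⟩, ?_⟩
  rw [← ZMod.natCast_eq_natCast_iff']
  have hmod (i : ι) : (((r * c i % d).toNat : ℕ) : ZMod d) = r * c i := by
    rw [← Int.cast_natCast, Int.toNat_of_nonneg (Int.emod_nonneg _ (by omega)), ZMod.intCast_mod]
    push_cast
    rfl
  have hc' := congrArg (Int.cast : ℤ → ZMod d) hc
  push_cast at hc' ⊢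
  simp_rw [hmod]
  calc ∑ i ∈ s, (r : ZMod d) * c i * g i = r * ∑ i ∈ s, (g i : ZMod d) * c i := by
        rw [Finset.mul_sum]; exact Finset.sum_congr rfl fun i _ => by ring
    _ = r := by rw [← hc', mul_one]

end Combinations

section LeastInClass

variable {C : Set ℕ} {d i j n : ℕ}

-- `omega1 k a = leastInClass (S1 k a) (a k)` and `omega2 k a = leastInClass (S2 k a) (a k)`.
noncomputable def leastInClass (C : Set ℕ) (d i : ℕ) : ℕ :=
  sInf {n | n ∈ C ∧ n % d = i % d}

theorem leastInClass_congr (h : i % d = j % d) : leastInClass C d i = leastInClass C d j := by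
  rw [leastInClass, leastInClass, h]

theorem leastInClass_le (hn : n ∈ C) (h : n % d = i % d) : leastInClass C d i ≤ n :=
  Nat.sInf_le ⟨hn, h⟩

theorem leastInClass_mem (h : ∃ n ∈ C, n % d = i % d) :
    leastInClass C d i ∈ C ∧ leastInClass C d i % d = i % d :=
  Nat.sInf_mem h

theorem exists_eq_leastInClass_add_mul (hn : n ∈ C) : ∃ q, n = leastInClass C d n + q * d := by
  have hle := leastInClass_le (d := d) hn rfl
  obtain ⟨-, hmod⟩ := leastInClass_mem (C := C) (d := d) ⟨n, hn, rfl⟩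
  obtain ⟨q, hq⟩ := (Nat.modEq_iff_dvd' hle).mp hmod
  exact ⟨q, by rw [mul_comm]; omega⟩

end LeastInClass

section Cone

variable {ι : Type*} {t : Finset ι} {g : ι → ℕ} {d : ℕ} {u : ℕ × ℕ}

-- `S k a = cone (range (k + 1)) a (a k)` by `rfl`.
def cone (t : Finset ι) (g : ι → ℕ) (d : ℕ) : Set (ℕ × ℕ) :=
  {u | ∃ x : ι → ℕ, u = ∑ i ∈ t, x i • (g i, d - g i)}

theorem mem_cone_iff (hg : ∀ i ∈ t, g i ≤ d) :
    u ∈ cone t g d ↔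
      ∃ x : ι → ℕ, u.1 = ∑ i ∈ t, x i * g i ∧ u.1 + u.2 = (∑ i ∈ t, x i) * d := by
  simp only [cone, Set.mem_ofPred_eq, Prod.ext_iff, Prod.fst_sum, Prod.snd_sum, Prod.smul_fst,
    Prod.smul_snd, smul_eq_mul]
  refine exists_congr fun x => ?_
  have hsplit : ∑ i ∈ t, x i * g i + ∑ i ∈ t, x i * (d - g i) = (∑ i ∈ t, x i) * d := by
    rw [← Finset.sum_add_distrib, Finset.sum_mul]
    exact Finset.sum_congr rfl fun i hi => by rw [← mul_add, Nat.add_sub_cancel' (hg i hi)]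
  constructor <;> rintro ⟨h1, h2⟩ <;> omega

theorem swap_mem_cone_iff (hg : ∀ i ∈ t, g i ≤ d) :
    u.swap ∈ cone t (fun i => d - g i) d ↔ u ∈ cone t g d := by
  simp only [cone, Set.mem_ofPred_eq, Prod.ext_iff, Prod.fst_sum, Prod.snd_sum, Prod.smul_fst,
    Prod.smul_snd, Prod.fst_swap, Prod.snd_swap]
  refine exists_congr fun x => ?_
  have hsub : ∑ i ∈ t, x i • (d - (d - g i)) = ∑ i ∈ t, x i • g i :=
    Finset.sum_congr rfl fun i hi => by rw [Nat.sub_sub_self (hg i hi)]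
  rw [hsub, and_comm]

theorem exists_sum_eq_iff_exists_sum_erase_le [DecidableEq ι] {z : ι} (hz : z ∈ t) (hgz : g z = 0)
    {n m : ℕ} :
    (∃ x : ι → ℕ, n = ∑ i ∈ t, x i * g i ∧ ∑ i ∈ t, x i = m) ↔
      ∃ x : ι → ℕ, n = ∑ i ∈ t.erase z, x i * g i ∧ ∑ i ∈ t.erase z, x i ≤ m := by
  constructor
  · rintro ⟨x, hn, rfl⟩
    refine ⟨x, ?_, Finset.sum_le_sum_of_subset (Finset.erase_subset z t)⟩
    rw [hn, ← Finset.add_sum_erase t _ hz, hgz, mul_zero, zero_add]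
  · rintro ⟨x, hn, hle⟩
    set x' := Function.update x z (m - ∑ i ∈ t.erase z, x i)
    have hx' : ∀ i ∈ t.erase z, x' i = x i := fun i hi =>
      Function.update_of_ne (Finset.ne_of_mem_erase hi) _ _
    have hx'z : x' z = m - ∑ i ∈ t.erase z, x i := Function.update_self ..
    refine ⟨x', ?_, ?_⟩
    · rw [← Finset.add_sum_erase t _ hz, hgz, mul_zero, zero_add, hn]
      exact Finset.sum_congr rfl fun i hi => by rw [hx' i hi]
    · rw [← Finset.add_sum_erase t _ hz, Finset.sum_congr rfl hx', hx'z]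
      exact Nat.sub_add_cancel hle

theorem mem_cone_iff_minSummands [DecidableEq ι] (hd : 0 < d) (hg : ∀ i ∈ t, g i ≤ d) {z : ι}
    (hz : z ∈ t) (hgz : g z = 0) :
    u ∈ cone t g d ↔ d ∣ u.1 + u.2 ∧ u.1 ∈ combinations (t.erase z) g ∧
      minSummands (t.erase z) g u.1 ≤ (u.1 + u.2) / d := by
  rw [mem_cone_iff hg, mem_combinations_and_minSummands_le_iff,
    ← exists_sum_eq_iff_exists_sum_erase_le hz hgz]
  constructor
  · rintro ⟨x, h1, h2⟩
    exact ⟨h2 ▸ dvd_mul_left _ _, x, h1, by rw [h2, Nat.mul_div_cancel _ hd]⟩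
  · rintro ⟨hdvd, x, h1, h2⟩
    exact ⟨x, h1, by rw [h2, Nat.div_mul_cancel hdvd]⟩

end Cone

theorem sub_mod_mod_eq_of_dvd_add {d x y : ℕ} (hd : 0 < d) (h : d ∣ x + y) :
    (d - x % d) % d = y % d := by
  refine Nat.ModEq.add_left_cancel' (x % d) ?_
  calc x % d + (d - x % d) = d := Nat.add_sub_cancel' (Nat.mod_lt x hd).le
    _ ≡ x + y [MOD d] := ((Nat.modEq_zero_iff_dvd.2 dvd_rfl).trans
        (Nat.modEq_zero_iff_dvd.2 h).symm)
    _ ≡ x % d + y [MOD d] := ((Nat.mod_modEq x d).add_right y).symm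

section Curve

variable {k : ℕ} {a : ℕ → ℕ} {u : ℕ × ℕ} {i : ℕ}

theorem apply_le_of_strictMonoOn_Iic (ha : StrictMonoOn a (Set.Iic k)) :
    ∀ i ≤ k, a i ≤ a k :=
  fun _ hi => ha.monotoneOn hi (Set.mem_Iic.2 le_rfl) hi

theorem apply_bounds_of_strictMonoOn_Iic (ha : StrictMonoOn a (Set.Iic k)) {j : ℕ} (hj0 : 0 < j)
    (hjk : j < k) : a 0 < a j ∧ a j < a k :=
  ⟨ha (Nat.zero_le k) (Set.mem_Iic.2 hjk.le) hj0,
    ha (Set.mem_Iic.2 hjk.le) (Set.mem_Iic.2 le_rfl) hjk⟩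

theorem mem_S_iff_delta1 (ha0 : a 0 = 0) (hd : 0 < a k) (hle : ∀ i ≤ k, a i ≤ a k) :
    u ∈ S k a ↔ a k ∣ u.1 + u.2 ∧ u.1 ∈ S1 k a ∧ delta1 k a u.1 ≤ deg k a u := by
  have herase : (Finset.range (k + 1)).erase 0 = Finset.Icc 1 k := by
    ext i; simp only [Finset.mem_erase, Finset.mem_range, Finset.mem_Icc]; omega
  change u ∈ cone (Finset.range (k + 1)) a (a k) ↔ _
  rw [mem_cone_iff_minSummands hd (fun i hi => hle i (Finset.mem_range_succ_iff.1 hi))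
    (Finset.mem_range.2 k.succ_pos) ha0, herase]
  rfl

theorem mem_S_iff_delta2 (hd : 0 < a k) (hle : ∀ i ≤ k, a i ≤ a k) :
    u ∈ S k a ↔ a k ∣ u.1 + u.2 ∧ u.2 ∈ S2 k a ∧ delta2 k a u.2 ≤ deg k a u := by
  have hle' : ∀ i ∈ Finset.range (k + 1), a i ≤ a k := fun i hi =>
    hle i (Finset.mem_range_succ_iff.1 hi)
  change u ∈ cone (Finset.range (k + 1)) a (a k) ↔ _
  rw [← swap_mem_cone_iff hle', mem_cone_iff_minSummands hd (fun i _ => Nat.sub_le _ _)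
    (Finset.self_mem_range_succ k) (Nat.sub_self _), Finset.range_add_one,
    Finset.erase_insert Finset.notMem_range_self]
  simp only [Prod.fst_swap, Prod.snd_swap, add_comm u.2]
  rfl

theorem delta1_add_mul_le (hk : 0 < k) {n : ℕ} (hn : n ∈ S1 k a) (q : ℕ) :
    delta1 k a (n + q * a k) ≤ delta1 k a n + q :=
  minSummands_add_mul_le (Finset.mem_Icc.2 ⟨hk, le_rfl⟩) hn q

theorem delta2_add_mul_le (ha0 : a 0 = 0) (hk : 0 < k) {n : ℕ} (hn : n ∈ S2 k a) (q : ℕ) :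
    delta2 k a (n + q * a k) ≤ delta2 k a n + q := by
  have h := minSummands_add_mul_le (g := fun i => a k - a i) (Finset.mem_range.2 hk) hn q
  rwa [ha0, Nat.sub_zero] at h

theorem deg_add_mul_left (hd : 0 < a k) (p : ℕ) :
    deg k a (u.1 + p * a k, u.2) = deg k a u + p := by
  rw [deg, deg, add_right_comm, Nat.add_mul_div_right _ _ hd]

theorem deg_add_mul_right (hd : 0 < a k) (p : ℕ) :
    deg k a (u.1, u.2 + p * a k) = deg k a u + p := by
  rw [deg, deg, ← add_assoc, Nat.add_mul_div_right _ _ hd]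

theorem mem_S'_iff (ha0 : a 0 = 0) (hd : 0 < a k) (hle : ∀ i ≤ k, a i ≤ a k) :
    u ∈ S' k a ↔ a k ∣ u.1 + u.2 ∧ u.1 ∈ S1 k a ∧ u.2 ∈ S2 k a := by
  have he0 (p : ℕ) : u + p • e k a 0 = (u.1, u.2 + p * a k) := by simp [e, Prod.ext_iff]
  have hed (p : ℕ) : u + p • e k a (a k) = (u.1 + p * a k, u.2) := by simp [e, Prod.ext_iff]
  constructor
  · rintro ⟨p, h0, hd'⟩
    rw [he0, mem_S_iff_delta1 ha0 hd hle] at h0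
    rw [hed, mem_S_iff_delta2 hd hle] at hd'
    refine ⟨(Nat.dvd_add_left (dvd_mul_left _ p)).mp ?_, h0.2.1, hd'.2.1⟩
    simpa only [add_assoc] using h0.1
  · rintro ⟨hdvd, h1, h2⟩
    refine ⟨delta1 k a u.1 + delta2 k a u.2, ?_, ?_⟩
    · rw [he0, mem_S_iff_delta1 ha0 hd hle, deg_add_mul_right hd]
      refine ⟨?_, h1, by dsimp only; omega⟩
      rw [← add_assoc]
      exact (Nat.dvd_add_right hdvd).2 (dvd_mul_left _ _)
    · rw [hed, mem_S_iff_delta2 hd hle, deg_add_mul_left hd]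
      refine ⟨?_, h2, by dsimp only; omega⟩
      rw [add_right_comm]
      exact (Nat.dvd_add_right hdvd).2 (dvd_mul_left _ _)

theorem gcd_sub_eq_one (ha0 : a 0 = 0) (hle : ∀ i ≤ k, a i ≤ a k)
    (hgcd : (Finset.Icc 1 k).gcd a = 1) :
    (Finset.range k).gcd (fun i => a k - a i) = 1 := by
  refine Nat.dvd_one.mp (hgcd ▸ Finset.dvd_gcd fun j hj => ?_)
  obtain ⟨hj1, hjk⟩ := Finset.mem_Icc.mp hj
  have hdk : (Finset.range k).gcd (fun i => a k - a i) ∣ a k := by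
    simpa [ha0] using
      Finset.gcd_dvd (f := fun i => a k - a i) (Finset.mem_range.2 (by omega : 0 < k))
  rcases hjk.lt_or_eq with hjk | rfl
  · have hdj := Finset.gcd_dvd (f := fun i => a k - a i) (Finset.mem_range.2 hjk)
    simpa [Nat.sub_sub_self (hle j hjk.le)] using Nat.dvd_sub hdk hdj
  · exact hdk

theorem omega1_spec (hd : 0 < a k) (hgcd : (Finset.Icc 1 k).gcd a = 1) (i : ℕ) :
    omega1 k a i ∈ S1 k a ∧ omega1 k a i % a k = i % a k :=
  leastInClass_mem (exists_mem_combinations_mod_eq hd hgcd i)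

theorem omega2_spec (ha0 : a 0 = 0) (hd : 0 < a k) (hle : ∀ i ≤ k, a i ≤ a k)
    (hgcd : (Finset.Icc 1 k).gcd a = 1) (i : ℕ) :
    omega2 k a i ∈ S2 k a ∧ omega2 k a i % a k = i % a k :=
  leastInClass_mem (exists_mem_combinations_mod_eq hd (gcd_sub_eq_one ha0 hle hgcd) i)

theorem dvd_w_fst_add_snd (ha0 : a 0 = 0) (hd : 0 < a k) (hle : ∀ i ≤ k, a i ≤ a k)
    (hgcd : (Finset.Icc 1 k).gcd a = 1) (hi : i ≤ a k) :
    a k ∣ (w k a i).1 + (w k a i).2 := by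
  apply Nat.dvd_of_mod_eq_zero
  change (omega1 k a i + omega2 k a (a k - i)) % a k = 0
  rw [Nat.add_mod, (omega1_spec hd hgcd i).2, (omega2_spec ha0 hd hle hgcd _).2, ← Nat.add_mod,
    Nat.add_sub_cancel' hi, Nat.mod_self]

theorem w_mem_S' (ha0 : a 0 = 0) (hd : 0 < a k) (hle : ∀ i ≤ k, a i ≤ a k)
    (hgcd : (Finset.Icc 1 k).gcd a = 1) (hi : i ≤ a k) :
    w k a i ∈ S' k a :=
  (mem_S'_iff ha0 hd hle).2 ⟨dvd_w_fst_add_snd ha0 hd hle hgcd hi, (omega1_spec hd hgcd i).1,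
    (omega2_spec ha0 hd hle hgcd _).1⟩

theorem w_mod_eq (hd : 0 < a k) (h : a k ∣ u.1 + u.2) :
    w k a (u.1 % a k) = (omega1 k a u.1, omega2 k a u.2) :=
  Prod.ext (leastInClass_congr (Nat.mod_mod _ _))
    (leastInClass_congr (sub_mod_mod_eq_of_dvd_add hd h))

theorem mem_II_iff (ha0 : a 0 = 0) (ha : StrictMonoOn a (Set.Iic k)) (hd : 0 < a k)
    (hgcd : (Finset.Icc 1 k).gcd a = 1) :
    i ∈ II k a ↔ i < a k ∧ deg k a (w k a i) < delta1 k a (w k a i).1 := by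
  have hle := apply_le_of_strictMonoOn_Iic ha
  refine ⟨fun ⟨hi1, hi2, _, hlt⟩ => ⟨by omega, hlt⟩, fun ⟨hi, hlt⟩ => ⟨?_, by omega, ?_, hlt⟩⟩
  · by_contra! h0
    obtain rfl : i = 0 := by omega
    have hw : (w k a 0).1 = 0 := Nat.le_zero.mp (leastInClass_le zero_mem_combinations rfl)
    have hδ : delta1 k a 0 = 0 := minSummands_zero
    rw [hw] at hlt
    omega
  · rintro j hj1 hjk rfl
    have hj := apply_bounds_of_strictMonoOn_Iic ha (j := j) (by omega) (by omega)
    have hjmem : j ∈ Finset.Icc 1 k := Finset.mem_Icc.2 ⟨hj1, by omega⟩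
    have hw : (w k a (a j)).1 = a j := by
      have hω : omega1 k a (a j) ≤ a j := leastInClass_le (mem_combinations_of_mem hjmem) rfl
      have hmod := (omega1_spec hd hgcd (a j)).2
      rwa [Nat.mod_eq_of_lt hj.2, Nat.mod_eq_of_lt (by omega)] at hmod
    have hdeg : 1 ≤ deg k a (w k a (a j)) := Nat.div_pos
      (Nat.le_of_dvd (by omega) (dvd_w_fst_add_snd ha0 hd hle hgcd hj.2.le)) hd
    have hδ : delta1 k a (a j) ≤ 1 := minSummands_le_one_of_mem hjmem
    rw [hw] at hlt
    omega

theorem injOn_w (hd : 0 < a k) (hgcd : (Finset.Icc 1 k).gcd a = 1) :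
    Set.InjOn (w k a) (II k a) := by
  rintro i ⟨hi1, hi2, -⟩ j ⟨hj1, hj2, -⟩ hij
  have h := congrArg (· % a k) (congrArg Prod.fst hij)
  simp only [w, (omega1_spec hd hgcd _).2] at h
  rwa [Nat.mod_eq_of_lt (by omega), Nat.mod_eq_of_lt (by omega)] at h

theorem ncard_II_le (ha : StrictMonoOn a (Set.Iic k)) (hk : 1 ≤ k) :
    (II k a).ncard ≤ a k - k := by
  set F := Finset.Icc 1 (a k - 1) \ (Finset.Icc 1 (k - 1)).image a
  have hsub : II k a ⊆ F := by
    rintro i ⟨hi1, hi2, hnot, -⟩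
    simp only [F, Finset.coe_sdiff, Finset.coe_Icc, Finset.coe_image, Set.mem_sdiff, Set.mem_Icc,
      Set.mem_image]
    exact ⟨⟨hi1, hi2⟩, fun ⟨j, ⟨hj1, hj2⟩, hji⟩ => hnot j hj1 hj2 hji.symm⟩
  have himage : (Finset.Icc 1 (k - 1)).image a ⊆ Finset.Icc 1 (a k - 1) := by
    simp only [Finset.subset_iff, Finset.mem_image, Finset.mem_Icc]
    rintro _ ⟨j, ⟨hj1, hj2⟩, rfl⟩
    have := apply_bounds_of_strictMonoOn_Iic ha (j := j) (by omega) (by omega)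
    omega
  have hinj : Set.InjOn a (Finset.Icc 1 (k - 1)) :=
    ha.injOn.mono fun j hj => by simp at hj ⊢; omega
  calc (II k a).ncard ≤ F.card := (Set.ncard_le_ncard hsub F.finite_toSet).trans_eq
        (Set.ncard_coe_finset F)
    _ = a k - k := by
      rw [Finset.card_sdiff_of_subset himage, Finset.card_image_of_injOn hinj, Nat.card_Icc,
        Nat.card_Icc]
      omega

theorem mem_image_w_of_mem_S'_diff_S (ha0 : a 0 = 0) (ha : StrictMonoOn a (Set.Iic k))
    (hd : 0 < a k) (hgcd : (Finset.Icc 1 k).gcd a = 1)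
    (hcond : ∀ i ∈ II k a, delta1 k a (w k a i).1 = deg k a (w k a i) + 1 ∧
      delta2 k a (w k a i).2 = deg k a (w k a i) + 1)
    (hu : u ∈ S' k a \ S k a) : u ∈ w k a '' II k a := by
  have hle := apply_le_of_strictMonoOn_Iic ha
  have hk : 0 < k := Nat.pos_of_ne_zero fun hk => by simp [hk, ha0] at hd
  obtain ⟨hu', huS⟩ := hu
  obtain ⟨hdvd, h1, h2⟩ := (mem_S'_iff ha0 hd hle).1 hu'
  have hδ1 : deg k a u < delta1 k a u.1 :=
    not_le.1 fun h => huS ((mem_S_iff_delta1 ha0 hd hle).2 ⟨hdvd, h1, h⟩)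
  have hδ2 : deg k a u < delta2 k a u.2 :=
    not_le.1 fun h => huS ((mem_S_iff_delta2 hd hle).2 ⟨hdvd, h2, h⟩)
  set i := u.1 % a k
  have hw := w_mod_eq hd hdvd
  obtain ⟨q1, hq1⟩ : ∃ q, u.1 = omega1 k a u.1 + q * a k := exists_eq_leastInClass_add_mul h1
  obtain ⟨q2, hq2⟩ : ∃ q, u.2 = omega2 k a u.2 + q * a k := exists_eq_leastInClass_add_mul h2
  have hdeg : deg k a u = deg k a (w k a i) + q1 + q2 := by
    have hsum : u.1 + u.2 = (w k a i).1 + (w k a i).2 + (q1 + q2) * a k := by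
      rw [hw, add_mul]; dsimp only; omega
    rw [deg, deg, hsum, Nat.add_mul_div_right _ _ hd, add_assoc]
  have hδ1' : delta1 k a u.1 ≤ delta1 k a (w k a i).1 + q1 := by
    rw [hw]
    conv_lhs => rw [hq1]
    exact delta1_add_mul_le hk (omega1_spec hd hgcd u.1).1 q1
  have hδ2' : delta2 k a u.2 ≤ delta2 k a (w k a i).2 + q2 := by
    rw [hw]
    conv_lhs => rw [hq2]
    exact delta2_add_mul_le ha0 hk (omega2_spec ha0 hd hle hgcd u.2).1 q2
  have hi : i ∈ II k a := (mem_II_iff ha0 ha hd hgcd).2 ⟨Nat.mod_lt _ hd, by omega⟩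
  obtain ⟨hc1, hc2⟩ := hcond i hi
  obtain rfl : q1 = 0 := by omega
  obtain rfl : q2 = 0 := by omega
  rw [zero_mul, add_zero] at hq1 hq2
  exact ⟨i, hi, hw.trans (Prod.ext hq1.symm hq2.symm)⟩

theorem w_mem_S'_diff_S (ha0 : a 0 = 0) (ha : StrictMonoOn a (Set.Iic k)) (hd : 0 < a k)
    (hgcd : (Finset.Icc 1 k).gcd a = 1) (hi : i ∈ II k a) :
    w k a i ∈ S' k a \ S k a := by
  have hle := apply_le_of_strictMonoOn_Iic ha
  obtain ⟨hlt, hδ⟩ := (mem_II_iff ha0 ha hd hgcd).1 hi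
  exact ⟨w_mem_S' ha0 hd hle hgcd hlt.le,
    fun h => hδ.not_ge ((mem_S_iff_delta1 ha0 hd hle).1 h).2.2⟩

end Curve

theorem statement_3_general (k : ℕ) (a : ℕ → ℕ) (ha0 : a 0 = 0)
    (hmono : ∀ i, i < k → a i < a (i+1)) (hgcd : (Finset.Icc 1 k).gcd a = 1)
    (hcond : ∀ i ∈ II k a, delta1 k a (w k a i).1 = deg k a (w k a i) + 1 ∧
      delta2 k a (w k a i).2 = deg k a (w k a i) + 1) :
    S' k a \ S k a = w k a '' II k a ∧
    (S' k a \ S k a).ncard = (II k a).ncard ∧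
    (S' k a \ S k a).ncard ≤ a k - k := by
  have hk : 1 ≤ k := Nat.pos_of_ne_zero fun hk => by simp [hk] at hgcd
  have ha : StrictMonoOn a (Set.Iic k) := strictMonoOn_Iic_of_lt_succ fun m hm => hmono m hm
  have hd : 0 < a k := ha0 ▸ ha (Nat.zero_le k) (Set.mem_Iic.2 le_rfl) hk
  have hS : S' k a \ S k a = w k a '' II k a :=
    Set.Subset.antisymm (fun _ hu => mem_image_w_of_mem_S'_diff_S ha0 ha hd hgcd hcond hu)
      (Set.image_subset_iff.2 fun _ hi => w_mem_S'_diff_S ha0 ha hd hgcd hi)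
  have hcard : (S' k a \ S k a).ncard = (II k a).ncard := hS ▸ (injOn_w hd hgcd).ncard_image
  exact ⟨hS, hcard, hcard ▸ ncard_II_le ha hk⟩

theorem statement_3 (k : ℕ) (a : ℕ → ℕ) (hk : 3 ≤ k) (ha0 : a 0 = 0)
    (hmono : ∀ i, i < k → a i < a (i+1)) (hgcd : (Finset.Icc 1 k).gcd a = 1)
    (hne : (II k a).Nonempty)
    (hcond : ∀ i ∈ II k a, delta1 k a (w k a i).1 = deg k a (w k a i) + 1 ∧
      delta2 k a (w k a i).2 = deg k a (w k a i) + 1) :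
    S' k a \ S k a = w k a '' II k a ∧
    (S' k a \ S k a).ncard = (II k a).ncard ∧
    (S' k a \ S k a).ncard ≤ a k - k :=
  statement_3_general k a ha0 hmono hgcd hcond

end ProjMonomialCurve
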